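/- Let A be a right regular band, c ∈ A a central element, and I1, I2 subsemigroups of A with A = I1 ×_c I2. If x = ⟨⟨x1,x2⟩⟩_c and z = ⟨⟨z1,z2⟩⟩_c with x1, z1 ∈ I1 and x2, z2 ∈ I2, then x·z = ⟨⟨x1·z1, x2·z2⟩⟩_c. -/

import Mathlib

/-!
The conditions of `x·z = ⟨⟨x1·z1, x2·z2⟩⟩_c` are proved one coordinate at a time; the second
coordinate follows from the first because `A = I1 ×_c I2` implies `A = I2 ×_c I1`.

The key identity is `x·x1·z = x·z·(x1·z1)`. By (Mod1), `x·x1·z` is the join of `x·x1·z·z1` and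
`x·x1·z·z2`. Every product of an element of `I1` with one of `I2` lies below `c` (by (Exi) it is
`y·c` for some `y`), and from this `x·x1·z·z2 = x·x1·z·c`, which lies below `x·x1·z·z1`. The
identity gives (dist) and (comm) for `x·z`. (Mod2) carries the joins in (p1) for `x` and `z`
over to the join in (p1) for `x·z`, and (prod) is a direct computation.
-/

namespace RRBFactor

variable {A : Type*} [Semigroup A]

/-- The underlying order of a right regular band: `x ≤ y ↔ x·y = x`. -/
def rle (x y : A) : Prop := x * y = x

/-- `s` is the least upper bound of `{a, b}` with respect to the underlying
order of a right regular band. -/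
def IsLub2 (a b s : A) : Prop :=
  rle a s ∧ rle b s ∧ ∀ t : A, rle a t → rle b t → rle s t

/-- `IsPair c x1 x2 x` expresses `x = ⟨⟨x1,x2⟩⟩_c`: the conjunction of
(comm), (dist), (p1), (p2) and (prod). -/
def IsPair (c x1 x2 x : A) : Prop :=
  (x * x1 = x1 * x ∧ x * x2 = x2 * x) ∧
  IsLub2 (x * x1) (x * x2) x ∧
  IsLub2 (x * x1) (c * x1) x1 ∧
  IsLub2 (x * x2) (c * x2) x2 ∧
  x1 * x2 = x * c

/-- A subset is a subsemigroup when it is closed under multiplication. -/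
def MulClosed (I : Set A) : Prop := ∀ a ∈ I, ∀ b ∈ I, a * b ∈ I

/-- `CDirect c I1 I2` expresses `A = I1 ×_c I2`: the conjunction of (Perm),
(Mod1), (Mod2), (Abs) (in both symmetric forms), (Exi) and (Onto). -/
def CDirect (c : A) (I1 I2 : Set A) : Prop :=
  -- (Perm)
  (∀ x1 ∈ I1, ∀ x2 ∈ I2, x1 * x2 = x2 * x1) ∧
  -- (Mod1)
  (∀ x y : A, ∀ x1 ∈ I1, ∀ x2 ∈ I2, rle (x * c) (x1 * x2) →
    ∀ s : A, IsLub2 (x * x1) (x * x2) s →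
      IsLub2 (x * x1 * y) (x * x2 * y) (s * y) ∧
      IsLub2 (y * x * x1) (y * x * x2) (y * s)) ∧
  -- (Mod2)
  (∀ x y : A, ∀ x1 ∈ I1, ∀ x2 ∈ I2, rle (x1 * x2) x →
    (∀ s : A, IsLub2 (x * x1) (c * x1) s →
      IsLub2 (x * x1 * y) (c * x1 * y) (s * y) ∧
      IsLub2 (y * x * x1) (y * c * x1) (y * s)) ∧
    (∀ s : A, IsLub2 (x * x2) (c * x2) s →
      IsLub2 (x * x2 * y) (c * x2 * y) (s * y) ∧
      IsLub2 (y * x * x2) (y * c * x2) (y * s))) ∧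
  -- (Abs)
  (∀ x1 ∈ I1, ∀ y1 ∈ I1, ∀ z2 ∈ I2, ∀ s : A,
      (IsLub2 x1 (y1 * z2) s ↔ IsLub2 x1 (y1 * c) s)) ∧
  (∀ x2 ∈ I2, ∀ y2 ∈ I2, ∀ z1 ∈ I1, ∀ s : A,
      (IsLub2 x2 (y2 * z1) s ↔ IsLub2 x2 (y2 * c) s)) ∧
  -- (Exi)
  (∀ x1 ∈ I1, ∀ x2 ∈ I2, ∃ x : A, IsPair c x1 x2 x) ∧
  -- (Onto)
  (∀ x : A, ∃ x1 ∈ I1, ∃ x2 ∈ I2, IsPair c x1 x2 x)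

end RRBFactor

open RRBFactor

namespace RRBFactor

section Semigroup

variable {A : Type*} [Semigroup A] {a b d s c x x1 x2 : A}

theorem rle.trans (hab : rle a b) (hbd : rle b d) : rle a d := by
  rw [rle] at *
  rw [← hab, mul_assoc, hbd]

theorem IsLub2.symm (h : IsLub2 a b s) : IsLub2 b a s :=
  ⟨h.2.1, h.1, fun t hb ha => h.2.2 t ha hb⟩

theorem IsPair.prod (hx : IsPair c x1 x2 x) : x1 * x2 = x * c := hx.2.2.2.2

theorem IsPair.dist (hx : IsPair c x1 x2 x) : IsLub2 (x * x1) (x * x2) x := hx.2.1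

theorem IsPair.isLub2_fst (hx : IsPair c x1 x2 x) : IsLub2 (x * x1) (c * x1) x1 := hx.2.2.1

theorem IsPair.isLub2_snd (hx : IsPair c x1 x2 x) : IsLub2 (x * x2) (c * x2) x2 := hx.2.2.2.1

theorem CDirect.perm {I1 I2 : Set A} (h : CDirect c I1 I2) {a b : A} (ha : a ∈ I1)
    (hb : b ∈ I2) : a * b = b * a :=
  h.1 a ha b hb

theorem IsPair.swap (hx : IsPair c x1 x2 x) (hp : x1 * x2 = x2 * x1) : IsPair c x2 x1 x :=
  let ⟨⟨h1, h2⟩, hd, hp1, hp2, hprod⟩ := hx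
  ⟨⟨h2, h1⟩, hd.symm, hp2, hp1, hp ▸ hprod⟩

theorem CDirect.symm {I1 I2 : Set A} (h : CDirect c I1 I2) : CDirect c I2 I1 := by
  obtain ⟨perm, mod1, mod2, abs1, abs2, exi, onto⟩ := h
  refine ⟨fun x2 h2 x1 h1 => (perm x1 h1 x2 h2).symm, ?_, ?_, abs2, abs1, ?_, ?_⟩
  · intro x y x2 h2 x1 h1 hle s hs
    rw [← perm x1 h1 x2 h2] at hle
    obtain ⟨hr, hl⟩ := mod1 x y x1 h1 x2 h2 hle s hs.symm
    exact ⟨hr.symm, hl.symm⟩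
  · intro x y x2 h2 x1 h1 hle
    rw [← perm x1 h1 x2 h2] at hle
    exact (mod2 x y x1 h1 x2 h2 hle).symm
  · intro x2 h2 x1 h1
    obtain ⟨x, hx⟩ := exi x1 h1 x2 h2
    exact ⟨x, hx.swap (perm x1 h1 x2 h2)⟩
  · intro x
    obtain ⟨x1, h1, x2, h2, hx⟩ := onto x
    exact ⟨x2, h2, x1, h1, hx.swap (perm x1 h1 x2 h2)⟩

end Semigroup

class IsRightRegularBand (A : Type*) [Semigroup A] : Prop where
  mul_self (a : A) : a * a = a
  right_regular (a b : A) : a * b * a = b * a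

open IsRightRegularBand

section RightRegularBand

variable {A : Type*} [Semigroup A] [IsRightRegularBand A] {a b s : A}

theorem rle_refl (a : A) : rle a a := mul_self a

theorem rle_mul_left (a b : A) : rle (a * b) b := by
  rw [rle, mul_assoc, mul_self]

theorem rle_antisymm (hab : rle a b) (hba : rle b a) : a = b :=
  calc a = a * b * a := by rw [hab, mul_self]
    _ = b * a := right_regular a b
    _ = b := hba

theorem rle.mul_right (h : rle a b) (t : A) : rle (a * t) (b * t) :=
  calc a * t * (b * t) = a * (t * b * t) := by simp only [mul_assoc]
    _ = a * t := by rw [right_regular, ← mul_assoc, h]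

theorem commute_of_rle (h : rle (b * a) b) : a * b = b * a :=
  (right_regular b a).symm.trans h

theorem IsLub2.unique {s' : A} (h : IsLub2 a b s) (h' : IsLub2 a b s') : s = s' :=
  rle_antisymm (h.2.2 _ h'.1 h'.2.1) (h'.2.2 _ h.1 h.2.1)

theorem IsLub2.eq_left_of_rle (h : IsLub2 a b s) (hba : rle b a) : s = a :=
  h.unique ⟨rle_refl a, hba, fun _ ha _ => ha⟩

end RightRegularBand

section Pair

variable {A : Type*} [Semigroup A] [IsRightRegularBand A] {c x x1 x2 : A}

theorem IsPair.mul_central_rle_fst_mul_snd (hx : IsPair c x1 x2 x) : rle (x * c) (x1 * x2) := by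
  rw [hx.prod]; exact rle_refl _

theorem IsPair.fst_mul_snd_rle (hc : ∀ y : A, c * y = y * c) (hx : IsPair c x1 x2 x) :
    rle (x1 * x2) x := by
  rw [hx.prod, ← hc]; exact rle_mul_left c x

theorem IsPair.mul_central_mul_snd (hx : IsPair c x1 x2 x) : x * c * x2 = x * c := by
  rw [← hx.prod, mul_assoc, mul_self]

theorem IsPair.mul_fst_mul_central (hc : ∀ y : A, c * y = y * c) (hx : IsPair c x1 x2 x)
    (hp : x1 * x2 = x2 * x1) : x * x1 * c = x * c := by
  rw [mul_assoc, ← hc, ← mul_assoc, (hx.swap hp).mul_central_mul_snd]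

theorem IsPair.mul_central_rle_mul_fst (hc : ∀ y : A, c * y = y * c) (hx : IsPair c x1 x2 x)
    (hp : x1 * x2 = x2 * x1) (u : A) : rle (u * x * c) (u * x * x1) := by
  have h : u * x * c = c * (u * x * x1) := by
    rw [hc, mul_assoc u x x1, mul_assoc u (x * x1) c, hx.mul_fst_mul_central hc hp, ← mul_assoc]
  rw [h]; exact rle_mul_left c _

theorem IsPair.mul_prod_eq (hc : ∀ y : A, c * y = y * c) {z z1 z2 : A} (hx : IsPair c x1 x2 x)
    (hz : IsPair c z1 z2 z) (hp : z1 * x2 = x2 * z1) : x1 * z1 * (x2 * z2) = x * z * c :=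
  calc x1 * z1 * (x2 * z2) = x1 * x2 * (z1 * z2) := by
        rw [mul_assoc x1, ← mul_assoc z1, hp]; simp only [mul_assoc]
    _ = x * c * (c * z) := by rw [hx.prod, hz.prod, hc]
    _ = x * z * c := by rw [← mul_assoc, mul_assoc x c c, mul_self, mul_assoc, hc, mul_assoc]

end Pair

section CDirect

variable {A : Type*} [Semigroup A] [IsRightRegularBand A] {c : A} {I1 I2 : Set A}
  {x x1 x2 z z1 z2 u : A}

theorem CDirect.rle_central_of_mem (hdp : CDirect c I1 I2) {a b : A} (ha : a ∈ I1)
    (hb : b ∈ I2) : rle (a * b) c := by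
  obtain ⟨-, -, -, -, -, exi, -⟩ := hdp
  obtain ⟨q, hq⟩ := exi a ha b hb
  rw [hq.prod, rle, mul_assoc, mul_self]

theorem CDirect.mul_mul_snd_eq_mul_central (hdp : CDirect c I1 I2) (hc : ∀ y : A, c * y = y * c)
    (hz1 : z1 ∈ I1) (hz2 : z2 ∈ I2) (hz : IsPair c z1 z2 z) (hu : u ∈ I1) :
    u * z * z2 = u * z * c := by
  have mod2 := hdp.2.2.1
  have hle : rle (u * z * z2) (u * z2) :=
    ((mod2 z u z1 hz1 z2 hz2 (hz.fst_mul_snd_rle hc)).2 z2 hz.isLub2_snd).2.1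
  calc u * z * z2 = u * z * z2 * c := (hle.trans (hdp.rle_central_of_mem hu hz2)).symm
    _ = u * (z * c * z2) := by
          rw [mul_assoc _ z2, ← hc, ← mul_assoc, mul_assoc u z c, mul_assoc]
    _ = u * z * c := by rw [hz.mul_central_mul_snd, mul_assoc]

theorem CDirect.mul_mul_fst_comm (hdp : CDirect c I1 I2) (hc : ∀ y : A, c * y = y * c)
    (hz1 : z1 ∈ I1) (hz2 : z2 ∈ I2) (hz : IsPair c z1 z2 z) (hu : u ∈ I1) :
    z * u * z1 = u * z * z1 := by
  -- (Mod2) makes `z·u·z1` the join of `u·z·z1` and `u·z·c`, and the latter lies below the former.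
  have mod2 := hdp.2.2.1
  have hlub := ((mod2 z (z * u) z1 hz1 z2 hz2 (hz.fst_mul_snd_rle hc)).1 z1 hz.isLub2_fst).2
  have e : z * u * c * z1 = u * z * c :=
    calc z * u * c * z1 = z1 * z2 * u * z1 := by
          rw [mul_assoc z u c, ← hc u, ← mul_assoc z c u, ← hz.prod]
      _ = z1 * u * (z1 * z2) := by
          rw [mul_assoc z1 z2 u, ← hdp.perm hu hz2, hdp.perm hz1 hz2]; simp only [mul_assoc]
      _ = u * z * c := by rw [← mul_assoc, right_regular, mul_assoc, hz.prod, mul_assoc]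
  rw [right_regular, e] at hlub
  exact hlub.eq_left_of_rle (hz.mul_central_rle_mul_fst hc (hdp.perm hz1 hz2) u)

theorem CDirect.mul_fst_mul_pair (hdp : CDirect c I1 I2) (hc : ∀ y : A, c * y = y * c)
    (hz1 : z1 ∈ I1) (hz2 : z2 ∈ I2) (hz : IsPair c z1 z2 z) (hx1 : x1 ∈ I1) (x : A) :
    x * x1 * z = x * z * (x1 * z1) := by
  have mod1 := hdp.2.1
  have hlub := (mod1 z (x * x1) z1 hz1 z2 hz2 hz.mul_central_rle_fst_mul_snd z hz.dist).2
  have e : x * x1 * z * z2 = x * x1 * z * c := by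
    have h := hdp.mul_mul_snd_eq_mul_central hc hz1 hz2 hz hx1
    simpa only [mul_assoc] using congrArg (x * ·) h
  rw [e] at hlub
  rw [hlub.eq_left_of_rle (hz.mul_central_rle_mul_fst hc (hdp.perm hz1 hz2) (x * x1))]
  simpa only [mul_assoc] using congrArg (x * ·) (hdp.mul_mul_fst_comm hc hz1 hz2 hz hx1).symm

theorem CDirect.pair_mul_comm_fst (hdp : CDirect c I1 I2) (hc : ∀ y : A, c * y = y * c)
    (hz1 : z1 ∈ I1) (hz2 : z2 ∈ I2) (hz : IsPair c z1 z2 z) (hx1 : x1 ∈ I1)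
    (hx : IsPair c x1 x2 x) : x * z * (x1 * z1) = x1 * z1 * (x * z) := by
  refine (commute_of_rle ?_).symm
  rw [← hdp.mul_fst_mul_pair hc hz1 hz2 hz hx1]
  exact hx.dist.1.mul_right z

theorem CDirect.isLub2_pair_mul_fst (hdp : CDirect c I1 I2) (hc : ∀ y : A, c * y = y * c)
    (hz1 : z1 ∈ I1) (hz2 : z2 ∈ I2) (hz : IsPair c z1 z2 z) (hx1 : x1 ∈ I1) (hx2 : x2 ∈ I2)
    (hx : IsPair c x1 x2 x) : IsLub2 (x * z * (x1 * z1)) (c * (x1 * z1)) (x1 * z1) := by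
  refine ⟨rle_mul_left _ _, rle_mul_left _ _, fun t hxt hct => ?_⟩
  have mod2 := hdp.2.2.1
  have hcomm := hdp.mul_mul_fst_comm hc hz1 hz2 hz hx1
  have hmid : rle (x1 * (z * z1)) t := by
    have hlub := ((mod2 x (z * z1) x1 hx1 x2 hx2 (hx.fst_mul_snd_rle hc)).1 x1 hx.isLub2_fst).1
    refine hlub.2.2 t ?_ ?_
    · have e : x * x1 * (z * z1) = x * z * (x1 * z1) := by
        simpa only [mul_assoc] using congrArg (x * ·) hcomm.symm
      rwa [e]
    · have e : c * x1 * (z * z1) = z * (c * (x1 * z1)) :=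
        calc c * x1 * (z * z1) = c * z * (x1 * z1) := by
              simpa only [mul_assoc] using congrArg (c * ·) hcomm.symm
          _ = z * (c * (x1 * z1)) := by rw [hc z, mul_assoc]
      rw [e]
      exact (rle_mul_left z _).trans hct
  have hlub := ((mod2 z x1 z1 hz1 z2 hz2 (hz.fst_mul_snd_rle hc)).1 z1 hz.isLub2_fst).2
  refine hlub.2.2 t (by rwa [mul_assoc x1 z]) ?_
  rwa [← hc, mul_assoc]

end CDirect

end RRBFactor

theorem rrb_pair_mul_general {A : Type*} [Semigroup A]
    (idem : ∀ x : A, x * x = x) (rrb : ∀ a b : A, a * b * a = b * a)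
    (c : A) (hc : ∀ x : A, c * x = x * c)
    (I1 I2 : Set A)
    (hdp : CDirect c I1 I2)
    (x x1 x2 z z1 z2 : A) (hx1 : x1 ∈ I1) (hz1 : z1 ∈ I1)
    (hx2 : x2 ∈ I2) (hz2 : z2 ∈ I2)
    (hx : IsPair c x1 x2 x) (hz : IsPair c z1 z2 z) :
    IsPair c (x1 * z1) (x2 * z2) (x * z) := by
  have : IsRightRegularBand A := ⟨idem, rrb⟩
  have hx' := hx.swap (hdp.perm hx1 hx2)
  have hz' := hz.swap (hdp.perm hz1 hz2)
  have mod1 := hdp.2.1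
  have hdist := (mod1 x z x1 hx1 x2 hx2 hx.mul_central_rle_fst_mul_snd x hx.dist).1
  rw [hdp.mul_fst_mul_pair hc hz1 hz2 hz hx1, hdp.symm.mul_fst_mul_pair hc hz2 hz1 hz' hx2] at hdist
  exact ⟨⟨hdp.pair_mul_comm_fst hc hz1 hz2 hz hx1 hx,
      hdp.symm.pair_mul_comm_fst hc hz2 hz1 hz' hx2 hx'⟩,
    hdist,
    hdp.isLub2_pair_mul_fst hc hz1 hz2 hz hx1 hx2 hx,
    hdp.symm.isLub2_pair_mul_fst hc hz2 hz1 hz' hx2 hx1 hx',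
    hx.mul_prod_eq hc hz (hdp.perm hz1 hx2)⟩

/-- If `A = I1 ×_c I2` for a central element `c` of a right regular band `A`,
and `x = ⟨⟨x1,x2⟩⟩_c`, `z = ⟨⟨z1,z2⟩⟩_c` with `x1, z1 ∈ I1`, `x2, z2 ∈ I2`,
then `x·z = ⟨⟨x1·z1, x2·z2⟩⟩_c`. -/
theorem rrb_pair_mul {A : Type*} [Semigroup A]
    (idem : ∀ x : A, x * x = x) (rrb : ∀ a b : A, a * b * a = b * a)
    (c : A) (hc : ∀ x : A, c * x = x * c)
    (I1 I2 : Set A) (hI1 : MulClosed I1) (hI2 : MulClosed I2)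
    (hdp : CDirect c I1 I2)
    (x x1 x2 z z1 z2 : A) (hx1 : x1 ∈ I1) (hz1 : z1 ∈ I1)
    (hx2 : x2 ∈ I2) (hz2 : z2 ∈ I2)
    (hx : IsPair c x1 x2 x) (hz : IsPair c z1 z2 z) :
    IsPair c (x1 * z1) (x2 * z2) (x * z) :=
  rrb_pair_mul_general idem rrb c hc I1 I2 hdp x x1 x2 z z1 z2 hx1 hz1 hx2 hz2 hx hz
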